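/- Let A be a countable model of SAPP and let B be any model of SAPP. Then there exists an elementary embedding of A into B. -/
import Mathlib


open FirstOrder Language Structure BoundedFormula

/-- The relation symbols of the language `L`: a single binary relation `O`. -/
inductive PerpRel : ℕ → Type
  | o : PerpRel 2

/-- The first-order language with a single binary relation symbol `O`. -/
def L : Language := ⟨fun _ => Empty, PerpRel⟩
  deriving IsRelational

/-- The binary relation symbol `O` of `L`. -/
abbrev oSym : L.Relations 2 := .o

/-- `O(xᵢ, xⱼ)` as a bounded formula. -/
def oBF {n : ℕ} (i j : Fin n) : L.BoundedFormula Empty n :=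
  oSym.boundedFormula₂ (&i) (&j)

/-- Finite conjunction of a list of bounded formulas. -/
def andAll {n : ℕ} : List (L.BoundedFormula Empty n) → L.BoundedFormula Empty n
  | [] => ⊤
  | φ :: l => φ ⊓ andAll l

/-- λ₁ₙ : ∀y₁…∀yₙ∀s(O(s,y₁) ∧ … ∧ O(s,yₙ) → ∃t(t ≠ y₁ ∧ … ∧ t ≠ yₙ ∧ O(s,t))).
Variables: y₁,…,yₙ are de Bruijn indices 0,…,n-1, s is index n, t is index n+1. -/
def lam1 (n : ℕ) : L.Sentence :=
  ((andAll ((List.finRange n).map fun i => oBF (Fin.last n) i.castSucc)).imp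
    ((andAll ((List.finRange n).map fun i =>
        ∼((&(Fin.last (n + 1))) =' (&(i.castSucc.castSucc)))) ⊓
      oBF ((Fin.last n).castSucc) (Fin.last (n + 1))).ex)).alls

/-- λ₂ₙ : ∀y₁…∀yₙ∃s(¬O(s,y₁) ∧ … ∧ ¬O(s,yₙ)).
Variables: y₁,…,yₙ are de Bruijn indices 0,…,n-1, s is index n. -/
def lam2 (n : ℕ) : L.Sentence :=
  ((andAll ((List.finRange n).map fun i => ∼(oBF (Fin.last n) i.castSucc))).ex).alls

/-- λ₃ : ∀x ¬O(x,x). -/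
def lam3 : L.Sentence := (∼(oBF (0 : Fin 1) 0)).alls

/-- λ₄ : ∀x∀y(O(x,y) → O(y,x)). -/
def lam4 : L.Sentence := ((oBF (0 : Fin 2) 1).imp (oBF (1 : Fin 2) 0)).alls

/-- λ₅ : ∀x∃y O(x,y). -/
def lam5 : L.Sentence := ((oBF (0 : Fin 2) 1).ex).alls

/-- λ₆ : ∀x∀y∀z∀t(O(x,z) ∧ O(y,z) ∧ O(x,t) → O(y,t)). -/
def lam6 : L.Sentence :=
  ((oBF (0 : Fin 4) 2 ⊓ oBF (1 : Fin 4) 2 ⊓ oBF (0 : Fin 4) 3).imp (oBF (1 : Fin 4) 3)).alls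

/-- The theory SAPP. -/
def SAPP : L.Theory :=
  {φ | ∃ n, 1 ≤ n ∧ φ = lam1 n} ∪ {φ | ∃ n, 2 ≤ n ∧ φ = lam2 n} ∪ {lam3, lam4, lam5, lam6}

section Extraction

variable {M : Type*} [L.Structure M]

/-- The interpretation of `O` in a structure. -/
def oo (x y : M) : Prop := Structure.RelMap oSym ![x, y]

lemma realize_oBF {n : ℕ} {i j : Fin n} {v : Empty → M} {xs : Fin n → M} :
    (oBF i j).Realize v xs ↔ oo (xs i) (xs j) := by
  simp [oBF, oo]

lemma realize_andAll {n : ℕ} {l : List (L.BoundedFormula Empty n)} {v : Empty → M}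
    {xs : Fin n → M} : (andAll l).Realize v xs ↔ ∀ φ ∈ l, φ.Realize v xs := by
  induction l with
  | nil => simp [andAll]
  | cons φ l ih => simp [andAll, ih]

lemma realize_lam3 (h : M ⊨ lam3) : ∀ x : M, ¬ oo x x := by
  simp only [lam3, Sentence.Realize, BoundedFormula.realize_alls,
    BoundedFormula.realize_not, realize_oBF] at h
  intro x
  simpa [Fin.snoc] using h ![x]

lemma realize_lam4 (h : M ⊨ lam4) : ∀ x y : M, oo x y → oo y x := by
  simp only [lam4, Sentence.Realize, BoundedFormula.realize_alls,
    BoundedFormula.realize_imp, realize_oBF] at h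
  intro x y
  simpa [Fin.snoc] using h ![x, y]

lemma realize_lam5 (h : M ⊨ lam5) : ∀ x : M, ∃ y, oo x y := by
  simp only [lam5, Sentence.Realize, BoundedFormula.realize_alls,
    BoundedFormula.realize_ex, realize_oBF] at h
  intro x
  obtain ⟨a, ha⟩ := h ![x]
  exact ⟨a, by simpa [Fin.snoc] using ha⟩

lemma realize_lam6 (h : M ⊨ lam6) : ∀ x y z t : M, oo x z → oo y z → oo x t → oo y t := by
  simp only [lam6, Sentence.Realize, BoundedFormula.realize_alls,
    BoundedFormula.realize_imp, BoundedFormula.realize_inf, realize_oBF] at h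
  intro x y z t
  have := h ![x, y, z, t]
  simpa [Fin.snoc] using this

lemma realize_lam1 (n : ℕ) (h : M ⊨ lam1 n) :
    ∀ v : Fin (n + 1) → M, (∀ i : Fin n, oo (v (Fin.last n)) (v i.castSucc)) →
      ∃ a : M, (∀ i : Fin n, a ≠ v i.castSucc) ∧ oo (v (Fin.last n)) a := by
  simp only [lam1, Sentence.Realize, BoundedFormula.realize_alls,
    BoundedFormula.realize_imp, BoundedFormula.realize_ex, BoundedFormula.realize_inf,
    realize_andAll, List.mem_map, List.mem_finRange, BoundedFormula.realize_not,
    BoundedFormula.realize_bdEqual] at h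
  intro v hv
  obtain ⟨a, ha1, ha2⟩ := h v (by rintro φ ⟨i, -, rfl⟩; rw [realize_oBF]; simpa using hv i)
  refine ⟨a, fun i => ?_, ?_⟩
  · have := ha1 _ ⟨i, trivial, rfl⟩
    simp only [BoundedFormula.realize_not, BoundedFormula.realize_bdEqual, Function.comp,
      Term.realize_var, Sum.elim_inr, Fin.snoc_last, Fin.snoc_castSucc] at this
    exact this
  · rw [realize_oBF] at ha2
    simpa using ha2

lemma realize_lam2 (n : ℕ) (h : M ⊨ lam2 n) :
    ∀ v : Fin n → M, ∃ a : M, ∀ i : Fin n, ¬ oo a (v i) := by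
  simp only [lam2, Sentence.Realize, BoundedFormula.realize_alls,
    BoundedFormula.realize_ex, realize_andAll, List.mem_map, List.mem_finRange,
    BoundedFormula.realize_not] at h
  intro v
  obtain ⟨a, ha⟩ := h v
  refine ⟨a, fun i => ?_⟩
  have := ha _ ⟨i, trivial, rfl⟩
  simp only [BoundedFormula.realize_not, realize_oBF, Fin.snoc_last, Fin.snoc_castSucc] at this
  exact this

end Extraction

section Props

open scoped Classical

variable {M : Type*} [L.Structure M]

/-- Semantic consequences of SAPP. -/
structure Props (M : Type*) [L.Structure M] : Prop where
  irrefl : ∀ x : M, ¬ oo x x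
  symm : ∀ {x y : M}, oo x y → oo y x
  nbr : ∀ x : M, ∃ y, oo x y
  six : ∀ {x y z t : M}, oo x z → oo y z → oo x t → oo y t
  inf : ∀ (s : M) (l : List M), ∃ t, oo s t ∧ t ∉ l
  fresh : ∀ l : List M, ∃ s : M, ∀ y ∈ l, ¬ oo s y

lemma lam1_mem {n : ℕ} (hn : 1 ≤ n) : lam1 n ∈ SAPP := Or.inl (Or.inl ⟨n, hn, rfl⟩)
lemma lam2_mem {n : ℕ} (hn : 2 ≤ n) : lam2 n ∈ SAPP := Or.inl (Or.inr ⟨n, hn, rfl⟩)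
lemma lam3_mem : lam3 ∈ SAPP := Or.inr (by simp)
lemma lam4_mem : lam4 ∈ SAPP := Or.inr (by simp)
lemma lam5_mem : lam5 ∈ SAPP := Or.inr (by simp)
lemma lam6_mem : lam6 ∈ SAPP := Or.inr (by simp)

lemma props_of_model [Nonempty M] (h : M ⊨ SAPP) : Props M := by
  haveI := h
  have h3 := realize_lam3 (SAPP.realize_sentence_of_mem (M := M) lam3_mem)
  have h4 := realize_lam4 (SAPP.realize_sentence_of_mem (M := M) lam4_mem)
  have h5 := realize_lam5 (SAPP.realize_sentence_of_mem (M := M) lam5_mem)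
  have h6 := realize_lam6 (SAPP.realize_sentence_of_mem (M := M) lam6_mem)
  refine ⟨h3, fun {x y} => h4 x y, h5, fun {x y z t} => h6 x y z t, ?_, ?_⟩
  · intro s l
    obtain ⟨y₀, hy₀⟩ := h5 s
    set n := l.length + 1 with hn
    have h1 := realize_lam1 n (SAPP.realize_sentence_of_mem (M := M) (lam1_mem (by omega)))
    set w : Fin n → M := fun i =>
      if hi : (i : ℕ) < l.length then
        (if oo s (l.get ⟨i, hi⟩) then l.get ⟨i, hi⟩ else y₀) else y₀ with hw
    have hv : ∀ i : Fin n, oo ((Fin.snoc w s : Fin (n + 1) → M) (Fin.last n))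
        ((Fin.snoc w s : Fin (n + 1) → M) i.castSucc) := by
      intro i
      rw [Fin.snoc_last, Fin.snoc_castSucc, hw]
      dsimp only
      split_ifs with h1' h2'
      · exact h2'
      · exact hy₀
      · exact hy₀
    obtain ⟨a, ha1, ha2⟩ := h1 (Fin.snoc w s) hv
    rw [Fin.snoc_last] at ha2
    refine ⟨a, ha2, fun hal => ?_⟩
    obtain ⟨k, hk⟩ := List.mem_iff_get.1 hal
    have hkn : (k : ℕ) < n := by omega
    have hne := ha1 ⟨k, hkn⟩
    rw [Fin.snoc_castSucc] at hne
    have hwk : w ⟨k, hkn⟩ = if oo s (l.get k) then l.get k else y₀ := by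
      rw [hw]
      dsimp only
      rw [dif_pos (show ((⟨k, hkn⟩ : Fin n) : ℕ) < l.length from k.2)]
    by_cases hos : oo s (l.get k)
    · rw [hwk, if_pos hos, hk] at hne; exact hne rfl
    · rw [hk] at hos; exact hos ha2
  · intro l
    set n := l.length + 2 with hn
    have h2 := realize_lam2 n (SAPP.realize_sentence_of_mem (M := M) (lam2_mem (by omega)))
    set w : Fin n → M := fun i =>
      if hi : (i : ℕ) < l.length then l.get ⟨i, hi⟩ else Classical.arbitrary M with hw
    obtain ⟨a, ha⟩ := h2 w
    refine ⟨a, fun y hy => ?_⟩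
    obtain ⟨k, hk⟩ := List.mem_iff_get.1 hy
    have hkn : (k : ℕ) < n := by omega
    have := ha ⟨k, hkn⟩
    rw [hw] at this
    dsimp only at this
    rw [dif_pos (show ((⟨k, hkn⟩ : Fin n) : ℕ) < l.length from k.2)] at this
    have : ¬ oo a (l.get k) := by convert this using 3
    rw [hk] at this
    exact this

end Props

section Classification

open scoped Classical

variable {M : Type*} [L.Structure M]

/-- Same neighbourhood relation. -/
def sim (x y : M) : Prop := ∀ z, oo x z ↔ oo y z

lemma sim_refl (x : M) : sim x x := fun _ => Iff.rfl
lemma sim_symm {x y : M} (h : sim x y) : sim y x := fun z => (h z).symm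
lemma sim_trans {x y z : M} (h1 : sim x y) (h2 : sim y z) : sim x z :=
  fun t => (h1 t).trans (h2 t)

/-- Same pair-class relation. -/
def pairRel (x y : M) : Prop := sim x y ∨ oo x y

/-- The similarity class of an element. -/
def simClass (x : M) : Set M := {y | sim x y}

lemma mem_simClass_self (x : M) : x ∈ simClass x := sim_refl x

lemma simClass_eq_of_sim {x y : M} (h : sim x y) : simClass x = simClass y :=
  Set.ext fun z => ⟨fun hz => sim_trans (sim_symm h) hz, fun hz => sim_trans h hz⟩

lemma sim_of_common (P : Props M) {x y w : M} (hx : oo x w) (hy : oo y w) : sim x y :=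
  fun t => ⟨fun h => P.six hx hy h, fun h => P.six hy hx h⟩

lemma not_oo_of_sim (P : Props M) {x y : M} (h : sim x y) : ¬ oo x y :=
  fun hxy => P.irrefl y ((h y).1 hxy)

lemma simClass_eq_nbhd (P : Props M) {w x : M} (h : oo w x) : simClass x = {z | oo w z} := by
  ext z
  constructor
  · intro hz
    exact P.symm ((hz w).1 (P.symm h))
  · intro hz
    exact sim_of_common P (P.symm h) (P.symm hz)

lemma pairRel_equivalence (P : Props M) : Equivalence (pairRel (M := M)) := by
  constructor
  · exact fun x => Or.inl (sim_refl x)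
  · rintro x y (h | h)
    · exact Or.inl (sim_symm h)
    · exact Or.inr (P.symm h)
  · rintro x y z (h1 | h1) (h2 | h2)
    · exact Or.inl (sim_trans h1 h2)
    · exact Or.inr ((h1 z).2 h2)
    · exact Or.inr (P.symm ((h2 x).1 (P.symm h1)))
    · exact Or.inl (sim_of_common P h1 (P.symm h2))

/-- The setoid of pair-classes. -/
def pairSetoid (P : Props M) : Setoid M := ⟨pairRel, pairRel_equivalence P⟩

lemma infinite_of_list {S : Set M} (h : ∀ l : List M, ∃ t ∈ S, t ∉ l) : S.Infinite := by
  rw [Set.infinite_coe_iff.symm, ← not_finite_iff_infinite]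
  intro hfin
  haveI : Finite S := hfin
  have hSfin : S.Finite := Set.toFinite S
  obtain ⟨t, ht, htl⟩ := h hSfin.toFinset.toList
  exact htl (by simpa using ht)

lemma nbhd_infinite (P : Props M) (w : M) : {z | oo w z}.Infinite := by
  apply infinite_of_list
  intro l
  obtain ⟨t, ht1, ht2⟩ := P.inf w l
  exact ⟨t, ht1, ht2⟩

lemma simClass_infinite (P : Props M) (x : M) : (simClass x).Infinite := by
  obtain ⟨y, hy⟩ := P.nbr x
  rw [simClass_eq_nbhd P (P.symm hy)]
  exact nbhd_infinite P y

lemma infinite_QP [Nonempty M] (P : Props M) : Infinite (Quotient (pairSetoid P)) := by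
  rw [← not_finite_iff_infinite]
  intro hfin
  haveI := Fintype.ofFinite (Quotient (pairSetoid P))
  choose nb hnb using P.nbr
  set l₀ : List M := (Finset.univ : Finset (Quotient (pairSetoid P))).toList.map Quotient.out
    with hl₀
  obtain ⟨s, hs⟩ := P.fresh (l₀ ++ l₀.map nb)
  set r : M := (Quotient.mk (pairSetoid P) s).out with hr
  have hrl : r ∈ l₀ := List.mem_map.2 ⟨_, Finset.mem_toList.2 (Finset.mem_univ _), rfl⟩
  have hpair : pairRel r s := Quotient.mk_out (s := pairSetoid P) s
  rcases hpair with hsim | hoo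
  · have : oo s (nb r) := (hsim (nb r)).1 (hnb r)
    exact hs (nb r) (List.mem_append.2 (Or.inr (List.mem_map.2 ⟨r, hrl, rfl⟩))) this
  · exact hs r (List.mem_append.2 (Or.inl hrl)) (P.symm hoo)

/-- Rank of `m` within a set of naturals. -/
noncomputable def rk (s : Set ℕ) (m : ℕ) : ℕ := (s ∩ Set.Iio m).ncard

lemma rk_lt {s : Set ℕ} {a b : ℕ} (ha : a ∈ s) (hab : a < b) : rk s a < rk s b := by
  apply Set.ncard_lt_ncard
  · constructor
    · exact Set.inter_subset_inter_right s (Set.Iio_subset_Iio hab.le)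
    · intro hsub
      have := hsub ⟨ha, hab⟩
      exact absurd this.2 (lt_irrefl a)
  · exact (Set.finite_Iio b).inter_of_right s

lemma rk_injOn {s : Set ℕ} {a b : ℕ} (ha : a ∈ s) (hb : b ∈ s) (h : rk s a = rk s b) :
    a = b := by
  rcases lt_trichotomy a b with hl | he | hl
  · exact absurd h (rk_lt ha hl).ne
  · exact he
  · exact absurd h.symm (rk_lt hb hl).ne

lemma rk_surj {s : Set ℕ} (hs : s.Infinite) : ∀ k, ∃ a ∈ s, rk s a = k := by
  intro k
  induction k with
  | zero =>
    refine ⟨sInf s, Nat.sInf_mem hs.nonempty, ?_⟩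
    rw [rk, show s ∩ Set.Iio (sInf s) = ∅ from ?_]
    · simp
    · ext x
      simp only [Set.mem_inter_iff, Set.mem_Iio, Set.mem_empty_iff_false, iff_false]
      rintro ⟨hx1, hx2⟩
      exact absurd (Nat.sInf_le hx1) (by omega)
  | succ k ih =>
    obtain ⟨a, ha, hka⟩ := ih
    have hne : (s ∩ Set.Ioi a).Nonempty := by
      by_contra hcon
      rw [Set.not_nonempty_iff_eq_empty] at hcon
      apply hs
      have hsub : s ⊆ Set.Iic a := by
        intro x hx
        by_contra hxa
        simp only [Set.mem_Iic, not_le] at hxa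
        exact Set.eq_empty_iff_forall_notMem.1 hcon x ⟨hx, hxa⟩
      exact (Set.finite_Iic a).subset hsub
    obtain ⟨hb1, hb2⟩ := Nat.sInf_mem hne
    rw [Set.mem_Ioi] at hb2
    refine ⟨sInf (s ∩ Set.Ioi a), hb1, ?_⟩
    have hset : s ∩ Set.Iio (sInf (s ∩ Set.Ioi a)) = insert a (s ∩ Set.Iio a) := by
      ext x
      simp only [Set.mem_inter_iff, Set.mem_Iio, Set.mem_insert_iff]
      constructor
      · rintro ⟨hx1, hx2⟩
        rcases lt_trichotomy x a with h1 | h1 | h1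
        · exact Or.inr ⟨hx1, h1⟩
        · exact Or.inl h1
        · have hxm : x ∈ s ∩ Set.Ioi a := ⟨hx1, by simpa using h1⟩
          have := Nat.sInf_le hxm
          omega
      · rintro (rfl | ⟨hx1, hx2⟩)
        · exact ⟨ha, hb2⟩
        · exact ⟨hx1, by omega⟩
    rw [rk, hset, Set.ncard_insert_of_notMem (by simp) ((Set.finite_Iio a).inter_of_right s)]
    rw [rk] at hka
    omega

end Classification

section Canonical

open scoped Classical

/-- The canonical countable SAPP model: pairs of infinite classes. -/
def CM : Type := ℕ × Bool × ℕ

instance : L.Structure CM where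
  funMap := fun {n} f _ => Empty.elim f
  RelMap := fun {n} r x =>
    match r with
    | .o => (x 0).1 = (x 1).1 ∧ (x 0).2.1 ≠ (x 1).2.1

variable {M : Type*} [L.Structure M]

lemma relMap_eq_oo {x : Fin 2 → M} : Structure.RelMap (oSym) x ↔ oo (x 0) (x 1) := by
  rw [oo, show ![x 0, x 1] = x from funext fun i => by fin_cases i <;> rfl]

lemma oo_CM {c d : CM} : oo c d ↔ (c.1 = d.1 ∧ c.2.1 ≠ d.2.1) := Iff.rfl

lemma equiv_CM [Countable M] [Nonempty M] (P : Props M) : Nonempty (M ≃[L] CM) := by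
  obtain ⟨enc, henc⟩ := Countable.exists_injective_nat M
  haveI : Infinite (Quotient (pairSetoid P)) := infinite_QP P
  haveI : Encodable (Quotient (pairSetoid P)) := Encodable.ofCountable _
  haveI : Denumerable (Quotient (pairSetoid P)) := Denumerable.ofEncodableOfInfinite _
  set e : Quotient (pairSetoid P) ≃ ℕ := Denumerable.eqv _ with he
  set rp : M → M := fun x => (Quotient.mk (pairSetoid P) x).out with hrp
  have hpr : ∀ x : M, pairRel (rp x) x := fun x => Quotient.mk_out (s := pairSetoid P) x
  set sB : M → Bool := fun x => decide (oo x (rp x)) with hsB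
  set F : M → CM := fun x =>
    (e (Quotient.mk (pairSetoid P) x), sB x, rk (enc '' simClass x) (enc x)) with hF
  -- rp is constant on pair classes
  have hrp_eq : ∀ {a b : M}, pairRel a b → rp a = rp b := by
    intro a b hab
    rw [hrp]
    dsimp only
    rw [Quotient.sound (s := pairSetoid P) hab]
  -- the side function distinguishes paired classes
  have hside : ∀ {a b : M}, oo a b → sB a ≠ sB b := by
    intro a b hab
    have hr : rp a = rp b := hrp_eq (Or.inr hab)
    rcases hpr a with hsim | hoo
    · -- rp a ≈ a
      have h1 : ¬ oo a (rp a) := not_oo_of_sim P (sim_symm hsim)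
      have h2 : oo b (rp b) := by
        rw [← hr]
        exact P.symm ((hsim b).2 hab)
      simp [hsB, h1, h2]
    · have h1 : oo a (rp a) := P.symm hoo
      have h2 : ¬ oo b (rp b) := by
        rw [← hr]
        exact fun hc => not_oo_of_sim P (sim_of_common P hoo (P.symm hab)) (P.symm hc)
      simp [hsB, h1, h2]
  -- sides equal plus same pair class implies similar
  have hsim_of : ∀ {a b : M}, pairRel a b → sB a = sB b → sim a b := by
    intro a b hab hs
    rcases hab with hsim | hoo
    · exact hsim
    · exact absurd hs (hside hoo)
  -- adjacency in terms of F
  have hadj : ∀ a b : M, (e (Quotient.mk (pairSetoid P) a) = e (Quotient.mk (pairSetoid P) b)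
      ∧ sB a ≠ sB b) ↔ oo a b := by
    intro a b
    constructor
    · rintro ⟨h1, h2⟩
      have hab : pairRel a b := Quotient.exact (s := pairSetoid P) (e.injective h1)
      rcases hab with hsim | hoo
      · exact absurd (by
          rcases hpr a with h | h
          · exact congrArg sB (rfl : a = a) ▸ (by
              have hr : rp a = rp b := hrp_eq (Or.inl hsim)
              have h1' : ¬ oo a (rp a) := not_oo_of_sim P (sim_symm h)
              have h2' : ¬ oo b (rp b) := by
                rw [← hr]
                exact fun hc => h1' ((hsim (rp a)).2 hc)
              simp [hsB, h1', h2'])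
          · have hr : rp a = rp b := hrp_eq (Or.inl hsim)
            have h1' : oo a (rp a) := P.symm h
            have h2' : oo b (rp b) := by
              rw [← hr]
              exact (hsim (rp a)).1 h1'
            simp [hsB, h1', h2']) h2
      · exact hoo
    · intro hab
      exact ⟨congrArg e (Quotient.sound (s := pairSetoid P) (Or.inr hab)), hside hab⟩
  -- injectivity
  have hinj : Function.Injective F := by
    intro a b hab
    rw [hF] at hab
    dsimp only at hab
    have h1 := congrArg Prod.fst hab
    have h2 := congrArg (fun p : CM => p.2.1) hab
    have h3 := congrArg (fun p : CM => p.2.2) hab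
    dsimp only at h1 h2 h3
    have hpair : pairRel a b := Quotient.exact (s := pairSetoid P) (e.injective h1)
    have hsim : sim a b := hsim_of hpair h2
    have hcl : simClass a = simClass b := simClass_eq_of_sim hsim
    rw [hcl] at h3
    apply henc
    exact rk_injOn (Set.mem_image_of_mem enc (hcl ▸ mem_simClass_self a))
      (Set.mem_image_of_mem enc (mem_simClass_self b)) h3
  -- surjectivity
  have hsurj : Function.Surjective F := by
    rintro ⟨n, b, k⟩
    set q := e.symm n with hq
    set r : M := q.out with hr
    have hmkr : Quotient.mk (pairSetoid P) r = q := Quotient.out_eq q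
    have main : ∀ X : Set M, X.Infinite → (∀ y ∈ X, pairRel y r) →
        (∀ y ∈ X, simClass y = X) → (∀ y ∈ X, sB y = b) →
        ∃ y : M, F y = (n, b, k) := by
      intro X hXinf hXpair hXcl hXside
      have hsinf : (enc '' X).Infinite := hXinf.image henc.injOn
      obtain ⟨m, hm, hrk⟩ := rk_surj hsinf k
      obtain ⟨y, hyX, hym⟩ := hm
      refine ⟨y, ?_⟩
      rw [hF]
      dsimp only
      refine Prod.ext ?_ (Prod.ext ?_ ?_)
      · show e (Quotient.mk (pairSetoid P) y) = n
        rw [show Quotient.mk (pairSetoid P) y = q from by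
          rw [← hmkr]; exact Quotient.sound (s := pairSetoid P) (hXpair y hyX), hq]
        exact e.apply_symm_apply n
      · exact hXside y hyX
      · show rk (enc '' simClass y) (enc y) = k
        rw [hXcl y hyX, hym]
        exact hrk
    have hrpr : ∀ y : M, pairRel y r → rp y = r := by
      intro y hyr
      rw [hrp]
      dsimp only
      rw [show Quotient.mk (pairSetoid P) y = q from by
        rw [← hmkr]; exact Quotient.sound (s := pairSetoid P) hyr, ← hr]
    cases b
    · -- side false: the similarity class of r itself
      apply main (simClass r) (simClass_infinite P r)
      · exact fun y hy => Or.inl (sim_symm hy)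
      · exact fun y hy => simClass_eq_of_sim (sim_symm hy)
      · intro y hy
        have h1 : rp y = r := hrpr y (Or.inl (sim_symm hy))
        have h2 : ¬ oo y r := not_oo_of_sim P (sim_symm hy)
        simp [hsB, h1, h2]
    · -- side true: the neighbourhood of r
      apply main {z | oo r z} (nbhd_infinite P r)
      · exact fun y hy => Or.inr (P.symm hy)
      · exact fun y hy => simClass_eq_nbhd P hy
      · intro y hy
        have h1 : rp y = r := hrpr y (Or.inr (P.symm hy))
        simp [hsB, h1, P.symm hy]
  -- assemble the equivalence
  refine ⟨⟨Equiv.ofBijective F ⟨hinj, hsurj⟩, ?_, ?_⟩⟩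
  · intro n f x
    exact Empty.elim f
  · intro n r x
    cases r
    show Structure.RelMap oSym _ ↔ Structure.RelMap oSym x
    rw [relMap_eq_oo, relMap_eq_oo]
    show oo (F (x 0)) (F (x 1)) ↔ oo (x 0) (x 1)
    rw [oo_CM]
    exact hadj (x 0) (x 1)

end Canonical

section Final

instance (n : ℕ) : Subsingleton (PerpRel n) :=
  ⟨fun a b => by cases a; cases b; rfl⟩

instance (n : ℕ) : Countable (L.Relations n) :=
  @Subsingleton.to_countable _ (inferInstanceAs (Subsingleton (PerpRel n)))

instance (n : ℕ) : IsEmpty (L.Functions n) := inferInstanceAs (IsEmpty Empty)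

instance : Countable L.Symbols := by
  unfold Language.Symbols
  infer_instance

lemma infinite_of_props {M : Type*} [L.Structure M] [Nonempty M] (P : Props M) : Infinite M := by
  rw [← not_finite_iff_infinite]
  intro hfin
  haveI := Fintype.ofFinite M
  obtain ⟨t, -, htl⟩ := P.inf (Classical.arbitrary M) Finset.univ.toList
  exact htl (Finset.mem_toList.2 (Finset.mem_univ t))

end Final

/-- any countable model of SAPP elementarily embeds into any model of SAPP. -/
theorem statement_4 (A B : Type*) [L.Structure A] [L.Structure B] [Nonempty A] [Nonempty B]
    [Countable A] (hA : A ⊨ SAPP) (hB : B ⊨ SAPP) :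
    Nonempty (A ↪ₑ[L] B) := by
  haveI := hA
  haveI := hB
  have PA : Props A := props_of_model hA
  have PB : Props B := props_of_model hB
  haveI : Infinite B := infinite_of_props PB
  have hcard : L.card ≤ Cardinal.aleph0 := Cardinal.mk_le_aleph0
  obtain ⟨S, -, hScard⟩ := Language.exists_elementarySubstructure_card_eq L (∅ : Set B)
    Cardinal.aleph0 le_rfl (by simp) (by simpa using hcard)
    (by simpa using Cardinal.aleph0_le_mk B)
  rw [Cardinal.lift_uzero, Cardinal.lift_aleph0] at hScard
  have hS : Cardinal.mk S = Cardinal.aleph0 := hScard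
  haveI : Countable S := Cardinal.mk_le_aleph0_iff.1 hS.le
  haveI : Nonempty S := Cardinal.mk_ne_zero_iff.1 (by rw [hS]; exact Cardinal.aleph0_ne_zero)
  have PS : Props S := props_of_model inferInstance
  obtain ⟨eA⟩ := equiv_CM PA
  obtain ⟨eS⟩ := equiv_CM PS
  exact ⟨(S.subtype).comp ((eS.symm.comp eA).toElementaryEmbedding)⟩
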